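/- arXiv:1502.04157 — 2 statements merged into one kernel-verified Lean document; each statement's English description precedes it below -/
import Mathlib

section
/- For any twice continuously differentiable functions ζ, η : ℝ^N → ℝ, the pointwise identity holds: Δζ · Δ(ζη²) = [Δ(ζη)]² − 4(∇ζ·∇η)² − ζ²(Δη)² + 2ζΔζ|∇η|² − 4ζΔη(∇ζ·∇η). -/
open Real RealInnerProductSpace

noncomputable def lap {N : ℕ} (f : EuclideanSpace ℝ (Fin N) → ℝ)
    (x : EuclideanSpace ℝ (Fin N)) : ℝ :=
  ∑ i, fderiv ℝ (fun y => fderiv ℝ f y (EuclideanSpace.single i 1)) x (EuclideanSpace.single i 1)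

/-!
Both sides are polynomials in the values `ζ, η, Δζ, Δη, ∇ζ·∇η, |∇η|²` at the point: the Leibniz
rule `Δ(fg) = f Δg + g Δf + 2 ∇f·∇g`, applied to `ζη` and to `(ζη)η`, expresses `Δ(ζη)` and
`Δ(ζη²)` through them, after which the identity is a ring identity.
-/

section SecondDerivatives

variable {E : Type*} [NormedAddCommGroup E] [NormedSpace ℝ E] {f g : E → ℝ}

theorem differentiable_fderiv_apply (hf : ContDiff ℝ 2 f) (v : E) :
    Differentiable ℝ (fun y => fderiv ℝ f y v) :=
  ((hf.fderiv_right (by norm_num)).clm_apply contDiff_const).differentiable one_ne_zero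

theorem fderiv_fderiv_mul_apply (hf : ContDiff ℝ 2 f) (hg : ContDiff ℝ 2 g) (x v : E) :
    fderiv ℝ (fun y => fderiv ℝ (fun z => f z * g z) y v) x v =
      f x * fderiv ℝ (fun y => fderiv ℝ g y v) x v + g x * fderiv ℝ (fun y => fderiv ℝ f y v) x v
        + 2 * (fderiv ℝ f x v * fderiv ℝ g x v) := by
  have hf₁ := hf.differentiable two_ne_zero
  have hg₁ := hg.differentiable two_ne_zero
  have hf₂ := differentiable_fderiv_apply hf v
  have hg₂ := differentiable_fderiv_apply hg v
  have first_deriv : (fun y => fderiv ℝ (fun z => f z * g z) y v) =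
      fun y => f y * fderiv ℝ g y v + g y * fderiv ℝ f y v := by
    funext y
    simp [fderiv_fun_mul (hf₁ y) (hg₁ y)]
  rw [first_deriv, fderiv_fun_add ((hf₁ x).fun_mul (hg₂ x)) ((hg₁ x).fun_mul (hf₂ x)),
    fderiv_fun_mul (hf₁ x) (hg₂ x), fderiv_fun_mul (hg₁ x) (hf₂ x)]
  simp only [add_apply, smul_apply, smul_eq_mul]
  ring

end SecondDerivatives

theorem inner_gradient_mul_left {E : Type*} [NormedAddCommGroup E] [InnerProductSpace ℝ E]
    [CompleteSpace E] {f g h : E → ℝ} {x : E} (hf : DifferentiableAt ℝ f x)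
    (hg : DifferentiableAt ℝ g x) :
    ⟪gradient (fun y => f y * g y) x, gradient h x⟫ =
      f x * ⟪gradient g x, gradient h x⟫ + g x * ⟪gradient f x, gradient h x⟫ := by
  simp only [inner_gradient_left, fderiv_fun_mul hf hg, add_apply, smul_apply, smul_eq_mul]

section Laplacian

variable {N : ℕ}

theorem inner_gradient_eq_sum_fderiv_mul (f g : EuclideanSpace ℝ (Fin N) → ℝ)
    (x : EuclideanSpace ℝ (Fin N)) :
    ⟪gradient f x, gradient g x⟫ =
      ∑ i, fderiv ℝ f x (EuclideanSpace.single i 1) * fderiv ℝ g x (EuclideanSpace.single i 1) := by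
  rw [← (EuclideanSpace.basisFun (Fin N) ℝ).sum_inner_mul_inner]
  simp [inner_gradient_left, inner_gradient_right]

theorem lap_mul {f g : EuclideanSpace ℝ (Fin N) → ℝ} (hf : ContDiff ℝ 2 f) (hg : ContDiff ℝ 2 g)
    (x : EuclideanSpace ℝ (Fin N)) :
    lap (fun y => f y * g y) x =
      f x * lap g x + g x * lap f x + 2 * ⟪gradient f x, gradient g x⟫ := by
  simp only [lap, fderiv_fderiv_mul_apply hf hg, inner_gradient_eq_sum_fderiv_mul,
    Finset.sum_add_distrib, Finset.mul_sum]

end Laplacian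

theorem stmt0 {N : ℕ} (ζ η : EuclideanSpace ℝ (Fin N) → ℝ)
    (hζ : ContDiff ℝ 2 ζ) (hη : ContDiff ℝ 2 η) (x : EuclideanSpace ℝ (Fin N)) :
    lap ζ x * lap (fun y => ζ y * (η y) ^ 2) x =
      (lap (fun y => ζ y * η y) x) ^ 2
      - 4 * ⟪gradient ζ x, gradient η x⟫ ^ 2
      - (ζ x) ^ 2 * (lap η x) ^ 2
      + 2 * ζ x * lap ζ x * ‖gradient η x‖ ^ 2
      - 4 * ζ x * lap η x * ⟪gradient ζ x, gradient η x⟫ := by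
  have lap_ζη := lap_mul hζ hη x
  have lap_ζηη : lap (fun y => ζ y * (η y) ^ 2) x =
      ζ x * η x * lap η x + η x * lap (fun y => ζ y * η y) x
        + 2 * ⟪gradient (fun y => ζ y * η y) x, gradient η x⟫ := by
    simpa only [mul_assoc, ← sq] using lap_mul (hζ.mul hη) hη x
  rw [lap_ζηη, inner_gradient_mul_left (hζ.differentiable two_ne_zero x)
    (hη.differentiable two_ne_zero x), real_inner_self_eq_norm_sq, lap_ζη]
  ring
end

section
/- Let Ω ⊆ ℝ^N be open, u, v ∈ C²(Ω) with u ≥ 0, v real-valued, satisfying −Δu = (1+|x|²)^{α/2} v on Ω, and set δ = sqrt(2/(p+1)) and γ = δ·u^{(p+1)/2} − v for p > 1. If additionally −Δv = (1+|x|²)^{α/2} u^p on Ω, then pointwise Δγ ≥ δ^{−1}(1+|x|²)^{α/2} u^{(p−1)/2} γ on Ω. -/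
open Real

/-!
Write `q = (p + 1) / 2`, so `δ q = δ⁻¹` and `q - 1 = (p - 1) / 2`. The core estimate is
`Δ(u^q) ≥ q u^(q-1) Δu` for `u ≥ 0`, `q > 1`: where `u > 0` the chain rule gives the extra term
`q (q - 1) u^(q-2) |∇u|² ≥ 0`; at a zero `x` of `u`, which is a minimum, `∇u(x) = 0`, so
`∂ᵢ(u^q) = q u^(q-1) ∂ᵢu` is `o(1) · O(|y - x|)` and both sides vanish. Since `Δ` is linear,
`Δγ ≥ δ q u^(q-1) Δu - Δv`, and inserting the two equations together with `u^p = u^(q-1) u^q`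
turns the right-hand side into exactly `δ⁻¹ (1 + |x|²)^(α/2) u^((p-1)/2) γ`.
-/

open Filter Topology Asymptotics

theorem hasFDerivAt_mul_zero_of_tendsto_zero {E : Type*} [NormedAddCommGroup E] [NormedSpace ℝ E]
    {f g : E → ℝ} {x : E} (hf : Tendsto f (𝓝 x) (𝓝 0)) (hg : DifferentiableAt ℝ g x)
    (hgx : g x = 0) : HasFDerivAt (fun y => f y * g y) (0 : E →L[ℝ] ℝ) x := by
  have h : (fun y => f y * g y) =o[𝓝 x] fun y => (1 : ℝ) * ‖y - x‖ :=
    ((isLittleO_one_iff ℝ).2 hf).mul_isBigO (by simpa [hgx] using hg.isBigO_sub.norm_right)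
  refine HasFDerivAt.of_isLittleO ?_
  simpa [hgx] using h

section

variable {N : ℕ}

noncomputable def coordDeriv (i : Fin N) (f : EuclideanSpace ℝ (Fin N) → ℝ)
    (y : EuclideanSpace ℝ (Fin N)) : ℝ :=
  fderiv ℝ f y (EuclideanSpace.single i 1)

theorem lap_eq_sum_coordDeriv (f : EuclideanSpace ℝ (Fin N) → ℝ) (x : EuclideanSpace ℝ (Fin N)) :
    lap f x = ∑ i, coordDeriv i (coordDeriv i f) x :=
  rfl

variable {f g u : EuclideanSpace ℝ (Fin N) → ℝ} {x : EuclideanSpace ℝ (Fin N)} {q : ℝ}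

theorem HasFDerivAt.coordDeriv_eq {f' : EuclideanSpace ℝ (Fin N) →L[ℝ] ℝ} (h : HasFDerivAt f f' x)
    (i : Fin N) : coordDeriv i f x = f' (EuclideanSpace.single i 1) := by
  rw [coordDeriv, h.fderiv]

theorem ContDiffAt.eventually_differentiableAt (hf : ContDiffAt ℝ 2 f x) :
    ∀ᶠ y in 𝓝 x, DifferentiableAt ℝ f y :=
  (hf.eventually (by simp)).mono fun _ hy => hy.differentiableAt two_ne_zero

theorem ContDiffAt.differentiableAt_coordDeriv (hf : ContDiffAt ℝ 2 f x) (i : Fin N) :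
    DifferentiableAt ℝ (coordDeriv i f) x :=
  ((hf.fderiv_right (m := 1) (by norm_num)).differentiableAt one_ne_zero).clm_apply
    (differentiableAt_const _)

theorem lap_const_mul_sub (c : ℝ) (hf : ∀ᶠ y in 𝓝 x, DifferentiableAt ℝ f y)
    (hg : ∀ᶠ y in 𝓝 x, DifferentiableAt ℝ g y)
    (hf' : ∀ i, DifferentiableAt ℝ (coordDeriv i f) x)
    (hg' : ∀ i, DifferentiableAt ℝ (coordDeriv i g) x) :
    lap (fun y => c * f y - g y) x = c * lap f x - lap g x := by
  have hpartial : ∀ i, coordDeriv i (fun y => c * f y - g y) =ᶠ[𝓝 x]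
      fun y => c * coordDeriv i f y - coordDeriv i g y := by
    intro i
    filter_upwards [hf, hg] with y hfy hgy
    simp [coordDeriv, fderiv_fun_sub (hfy.const_mul c) hgy, fderiv_const_mul hfy]
  simp only [lap_eq_sum_coordDeriv, Finset.mul_sum, ← Finset.sum_sub_distrib]
  refine Finset.sum_congr rfl fun i _ => ?_
  rw [coordDeriv, (hpartial i).fderiv_eq, fderiv_fun_sub ((hf' i).const_mul c) (hg' i),
    fderiv_const_mul (hf' i)]
  simp [coordDeriv]

theorem coordDeriv_rpow_eventuallyEq (hq : 1 ≤ q) (hu : ∀ᶠ y in 𝓝 x, DifferentiableAt ℝ u y)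
    (i : Fin N) :
    coordDeriv i (fun y => u y ^ q) =ᶠ[𝓝 x] fun y => q * u y ^ (q - 1) * coordDeriv i u y := by
  filter_upwards [hu] with y hy
  simp [coordDeriv, (hy.hasFDerivAt.rpow_const (Or.inr hq)).fderiv]

theorem hasFDerivAt_coordDeriv_rpow_of_eq_zero (hq : 1 < q) (hu : ContDiffAt ℝ 2 u x)
    (hu0 : ∀ᶠ y in 𝓝 x, 0 ≤ u y) (hux : u x = 0) (i : Fin N) :
    HasFDerivAt (coordDeriv i fun y => u y ^ q) (0 : EuclideanSpace ℝ (Fin N) →L[ℝ] ℝ) x := by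
  have hmin : IsLocalMin u x := hu0.mono fun y hy => hux ▸ hy
  have hpow : Tendsto (fun y => q * u y ^ (q - 1)) (𝓝 x) (𝓝 0) := by
    have := (hu.continuousAt.rpow_const (Or.inr (sub_nonneg.2 hq.le))).const_mul q
    simpa [ContinuousAt, hux, Real.zero_rpow (sub_ne_zero.2 hq.ne')] using this
  have hcrit : coordDeriv i u x = 0 := by simp [coordDeriv, hmin.fderiv_eq_zero]
  exact (hasFDerivAt_mul_zero_of_tendsto_zero hpow (hu.differentiableAt_coordDeriv i)
    hcrit).congr_of_eventuallyEq (coordDeriv_rpow_eventuallyEq hq.le hu.eventually_differentiableAt i)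

theorem hasFDerivAt_coordDeriv_rpow_of_pos (hq : 1 ≤ q) (hu : ContDiffAt ℝ 2 u x) (hux : 0 < u x)
    (i : Fin N) :
    HasFDerivAt (coordDeriv i fun y => u y ^ q)
      (q • (u x ^ (q - 1) • fderiv ℝ (coordDeriv i u) x +
        coordDeriv i u x • ((q - 1) * u x ^ (q - 1 - 1)) • fderiv ℝ u x)) x := by
  have h := (((hu.differentiableAt two_ne_zero).hasFDerivAt.rpow_const (p := q - 1)
    (Or.inl hux.ne')).mul (hu.differentiableAt_coordDeriv i).hasFDerivAt).const_mul q
  exact h.congr_of_eventuallyEq ((coordDeriv_rpow_eventuallyEq hq hu.eventually_differentiableAt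
    i).trans (.of_forall fun _ => mul_assoc _ _ _))

theorem differentiableAt_coordDeriv_rpow (hq : 1 < q) (hu : ContDiffAt ℝ 2 u x)
    (hu0 : ∀ᶠ y in 𝓝 x, 0 ≤ u y) (i : Fin N) :
    DifferentiableAt ℝ (coordDeriv i fun y => u y ^ q) x := by
  rcases hu0.self_of_nhds.eq_or_lt with hux | hux
  · exact (hasFDerivAt_coordDeriv_rpow_of_eq_zero hq hu hu0 hux.symm i).differentiableAt
  · exact (hasFDerivAt_coordDeriv_rpow_of_pos hq.le hu hux i).differentiableAt

theorem mul_lap_le_lap_rpow (hq : 1 < q) (hu : ContDiffAt ℝ 2 u x)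
    (hu0 : ∀ᶠ y in 𝓝 x, 0 ≤ u y) :
    q * u x ^ (q - 1) * lap u x ≤ lap (fun y => u y ^ q) x := by
  rw [lap_eq_sum_coordDeriv, lap_eq_sum_coordDeriv]
  rcases hu0.self_of_nhds.eq_or_lt with hux | hux
  · simp [coordDeriv, (hasFDerivAt_coordDeriv_rpow_of_eq_zero hq hu hu0 hux.symm _).fderiv, ← hux,
      Real.zero_rpow (sub_ne_zero.2 hq.ne')]
  rw [Finset.mul_sum]
  refine Finset.sum_le_sum fun i _ => ?_
  have hsq : 0 ≤ q * ((q - 1) * u x ^ (q - 1 - 1)) * coordDeriv i u x ^ 2 := by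
    have hq1 : 0 ≤ q - 1 := by linarith
    positivity
  rw [(hasFDerivAt_coordDeriv_rpow_of_pos hq.le hu hux i).coordDeriv_eq]
  simp only [coordDeriv, smul_apply, add_apply, smul_eq_mul] at hsq ⊢
  linear_combination hsq

end

theorem stmt15_general {N : ℕ} (Ω : Set (EuclideanSpace ℝ (Fin N))) (hΩ : IsOpen Ω)
    (p α : ℝ) (hp : 1 < p)
    (u v : EuclideanSpace ℝ (Fin N) → ℝ)
    (hu : ContDiffOn ℝ 2 u Ω) (hv : ContDiffOn ℝ 2 v Ω)
    (hu0 : ∀ x ∈ Ω, 0 ≤ u x)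
    (heq1 : ∀ x ∈ Ω, -lap u x = (1 + ‖x‖ ^ 2) ^ (α / 2) * v x)
    (heq2 : ∀ x ∈ Ω, -lap v x = (1 + ‖x‖ ^ 2) ^ (α / 2) * u x ^ p) :
    ∀ x ∈ Ω,
      lap (fun y => Real.sqrt (2 / (p + 1)) * u y ^ ((p + 1) / 2) - v y) x ≥
        (Real.sqrt (2 / (p + 1)))⁻¹ * (1 + ‖x‖ ^ 2) ^ (α / 2) *
          u x ^ ((p - 1) / 2) *
          (Real.sqrt (2 / (p + 1)) * u x ^ ((p + 1) / 2) - v x) := by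
  intro x hx
  set δ := Real.sqrt (2 / (p + 1))
  have hq : 1 < (p + 1) / 2 := by linarith
  have hδ : δ * δ * ((p + 1) / 2) = 1 := by
    rw [Real.mul_self_sqrt (by positivity)]
    field_simp
  have hδinv : δ⁻¹ = δ * ((p + 1) / 2) := inv_eq_of_mul_eq_one_right (by rw [← mul_assoc, hδ])
  have huC : ContDiffAt ℝ 2 u x := hu.contDiffAt (hΩ.mem_nhds hx)
  have hvC : ContDiffAt ℝ 2 v x := hv.contDiffAt (hΩ.mem_nhds hx)
  have hu0' : ∀ᶠ y in 𝓝 x, 0 ≤ u y := eventually_of_mem (hΩ.mem_nhds hx) hu0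
  have hpow : u x ^ p = u x ^ ((p - 1) / 2) * u x ^ ((p + 1) / 2) := by
    rw [← Real.rpow_add_of_nonneg (hu0 x hx) (by linarith) (by linarith)]
    ring_nf
  have hlap := mul_le_mul_of_nonneg_left (mul_lap_le_lap_rpow hq huC hu0')
    (Real.sqrt_nonneg (2 / (p + 1)))
  rw [show (p + 1) / 2 - 1 = (p - 1) / 2 by ring] at hlap
  rw [lap_const_mul_sub δ (huC.eventually_differentiableAt.mono fun y hy => hy.rpow_const
    (Or.inr hq.le)) hvC.eventually_differentiableAt (differentiableAt_coordDeriv_rpow hq huC hu0')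
    hvC.differentiableAt_coordDeriv, ge_iff_le, hδinv, ← neg_neg (lap v x), heq2 x hx, hpow]
  rw [← neg_neg (lap u x), heq1 x hx] at hlap
  linear_combination hlap + (1 + ‖x‖ ^ 2) ^ (α / 2) * u x ^ ((p - 1) / 2) * u x ^ ((p + 1) / 2) * hδ

theorem stmt15 {N : ℕ} (Ω : Set (EuclideanSpace ℝ (Fin N))) (hΩ : IsOpen Ω)
    (p α : ℝ) (hp : 1 < p) (hα : 0 ≤ α)
    (u v : EuclideanSpace ℝ (Fin N) → ℝ)
    (hu : ContDiffOn ℝ 2 u Ω) (hv : ContDiffOn ℝ 2 v Ω)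
    (hu0 : ∀ x ∈ Ω, 0 ≤ u x)
    (heq1 : ∀ x ∈ Ω, -lap u x = (1 + ‖x‖ ^ 2) ^ (α / 2) * v x)
    (heq2 : ∀ x ∈ Ω, -lap v x = (1 + ‖x‖ ^ 2) ^ (α / 2) * u x ^ p) :
    ∀ x ∈ Ω,
      lap (fun y => Real.sqrt (2 / (p + 1)) * u y ^ ((p + 1) / 2) - v y) x ≥
        (Real.sqrt (2 / (p + 1)))⁻¹ * (1 + ‖x‖ ^ 2) ^ (α / 2) *
          u x ^ ((p - 1) / 2) *
          (Real.sqrt (2 / (p + 1)) * u x ^ ((p + 1) / 2) - v x) :=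
  stmt15_general Ω hΩ p α hp u v hu hv hu0 heq1 heq2
end
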